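/- Let G = (V,E) be a finite simple graph, u ∈ V, and A, B ⊆ N_G(u) with A ∪ B = N_G(u). Let G′ be the split of G at u along (A,B). If 𝒞′ is a sigma uniform clique cover of G′, then there exists a sigma uniform clique cover 𝒞 of G with wgt(𝒞) = wgt(𝒞′). -/

import Mathlib

/-! Merging the two copies `u`, `u*` of the split vertex back into `u` is a graph homomorphism
from the split graph onto `G`. It is injective on every clique, because `u` and `u*` are not
adjacent, and every edge of `G` lifts to an edge of the split graph, because `A ∪ B` covers the
neighbourhood of `u`. So the images of the members of a sigma uniform cover form a sigma uniform
cover of `G` with members of the same sizes, and since the weight of a cover is the sum of the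
sizes of its members, the weight is unchanged. -/

namespace Paper

/-- A sigma `s`-clique cover of `G`: a multiset of vertex sets, each inducing a clique on
exactly `s` vertices, such that every edge of `G` has both endpoints in some member. -/
def IsSigmaCliqueCover {V : Type*} (G : SimpleGraph V) (s : ℕ)
    (C : Multiset (Finset V)) : Prop :=
  (∀ Q ∈ C, G.IsClique (Q : Set V) ∧ Q.card = s) ∧
  (∀ x y : V, G.Adj x y → ∃ Q ∈ C, x ∈ Q ∧ y ∈ Q)

/-- A sigma uniform clique cover of `G`: a multiset of vertex sets, each inducing a clique,
all of the same cardinality, such that every edge of `G` has both endpoints in some member. -/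
def IsSigmaUniformCover {V : Type*} (G : SimpleGraph V) (C : Multiset (Finset V)) : Prop :=
  (∀ Q ∈ C, G.IsClique (Q : Set V)) ∧
  (∃ s : ℕ, ∀ Q ∈ C, Q.card = s) ∧
  (∀ x y : V, G.Adj x y → ∃ Q ∈ C, x ∈ Q ∧ y ∈ Q)

/-- `freq_𝒞(v)`: the number of members of `𝒞` containing `v` (with multiplicity). -/
def freqC {V : Type*} [DecidableEq V] (C : Multiset (Finset V)) (v : V) : ℕ :=
  (C.filter fun Q => v ∈ Q).card

/-- `cost(𝒞) = Σ_v max(0, freq_𝒞(v) - 1)`. -/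
def costC {V : Type*} [Fintype V] [DecidableEq V] (C : Multiset (Finset V)) : ℕ :=
  ∑ v : V, (freqC C v - 1)

/-- `wgt(𝒞) = Σ_v freq_𝒞(v)`. -/
def wgt {V : Type*} [Fintype V] [DecidableEq V] (C : Multiset (Finset V)) : ℕ :=
  ∑ v : V, freqC C v

/-- The vertex set of the connected component of `v` in `G`. -/
def compSet {V : Type*} (G : SimpleGraph V) (v : V) : Set V := {w | G.Reachable v w}

/-- A cluster graph: no induced `P₃`; equivalently, every connected component induces a clique. -/
def IsClusterGraph {V : Type*} (G : SimpleGraph V) : Prop :=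
  ∀ ⦃x y z : V⦄, G.Adj x y → G.Adj y z → x ≠ z → G.Adj x z

/-- A uniform cluster graph: every connected component induces a clique and all connected
components have the same number of vertices. -/
def IsUniformCluster {V : Type*} (G : SimpleGraph V) : Prop :=
  IsClusterGraph G ∧ ∀ v w : V, (compSet G v).ncard = (compSet G w).ncard

/-- The split of `G` at `u` along `(A, B)`: a fresh vertex `none` is added; the copy `u`
keeps exactly the neighbors in `A`, the new copy `none` gets exactly the neighbors in `B`,
the two copies are non-adjacent, and all other adjacencies are unchanged. -/
def splitGraph {V : Type*} (G : SimpleGraph V) (u : V) (A B : Set V) :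
    SimpleGraph (Option V) where
  Adj x y :=
    match x, y with
    | some a, some b =>
        (a ≠ u ∧ b ≠ u ∧ G.Adj a b) ∨ (a = u ∧ b ≠ u ∧ b ∈ A) ∨ (b = u ∧ a ≠ u ∧ a ∈ A)
    | some a, none => a ≠ u ∧ a ∈ B
    | none, some b => b ≠ u ∧ b ∈ B
    | none, none => False
  symm := by
    refine ⟨?_⟩
    rintro (_ | a) (_ | b) h
    · exact h
    · exact h
    · exact h
    · rcases h with ⟨h1, h2, h3⟩ | ⟨h1, h2, h3⟩ | ⟨h1, h2, h3⟩
      · exact Or.inl ⟨h2, h1, h3.symm⟩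
      · exact Or.inr (Or.inr ⟨h1, h2, h3⟩)
      · exact Or.inr (Or.inl ⟨h1, h2, h3⟩)
  loopless := by
    refine ⟨?_⟩
    rintro (_ | a) h
    · exact h
    · rcases h with ⟨_, _, h3⟩ | ⟨h1, h2, _⟩ | ⟨h1, h2, _⟩
      · exact G.ne_of_adj h3 rfl
      · exact h2 h1
      · exact h2 h1

theorem wgt_eq_sum_card {V : Type*} [Fintype V] [DecidableEq V] (C : Multiset (Finset V)) :
    wgt C = (C.map Finset.card).sum := by
  induction C using Multiset.induction with
  | empty => simp [wgt, freqC]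
  | cons Q C ih =>
    have freq_cons (v : V) : freqC (Q ::ₘ C) v = (if v ∈ Q then 1 else 0) + freqC C v := by
      by_cases hv : v ∈ Q <;> simp [freqC, hv, add_comm]
    rw [Multiset.map_cons, Multiset.sum_cons, ← ih, wgt, wgt]
    simp only [freq_cons, Finset.sum_add_distrib, Finset.sum_boole, Finset.filter_mem_eq_inter,
      Finset.univ_inter, Nat.cast_id]

theorem wgt_map_image {α β : Type*} [Fintype α] [DecidableEq α] [Fintype β] [DecidableEq β]
    (f : α → β) (C : Multiset (Finset α)) (hf : ∀ Q ∈ C, Set.InjOn f Q) :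
    wgt (C.map (Finset.image f)) = wgt C := by
  rw [wgt_eq_sum_card, wgt_eq_sum_card, Multiset.map_map]
  congr 1
  exact Multiset.map_congr rfl fun Q hQ => Finset.card_image_of_injOn (hf Q hQ)

theorem _root_.SimpleGraph.IsClique.image_hom {α β : Type*} {G' : SimpleGraph α}
    {G : SimpleGraph β} (φ : G' →g G) {s : Set α} (hs : G'.IsClique s) :
    G.IsClique (φ '' s) := by
  rintro _ ⟨a, ha, rfl⟩ _ ⟨b, hb, rfl⟩ hab
  exact φ.map_adj (hs ha hb fun h => hab (congrArg φ h))

theorem IsSigmaUniformCover.map_hom {α β : Type*} [DecidableEq β] {G' : SimpleGraph α}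
    {G : SimpleGraph β} {C : Multiset (Finset α)} (hC : IsSigmaUniformCover G' C)
    (φ : G' →g G) (hinj : ∀ Q ∈ C, Set.InjOn φ Q)
    (hlift : ∀ x y, G.Adj x y → ∃ a b, G'.Adj a b ∧ φ a = x ∧ φ b = y) :
    IsSigmaUniformCover G (C.map (Finset.image φ)) := by
  obtain ⟨hclique, ⟨s, hcard⟩, hcover⟩ := hC
  refine ⟨?_, ⟨s, ?_⟩, ?_⟩
  · simp only [Multiset.mem_map, forall_exists_index, and_imp]
    rintro _ Q hQ rfl
    rw [Finset.coe_image]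
    exact (hclique Q hQ).image_hom φ
  · simp only [Multiset.mem_map, forall_exists_index, and_imp]
    rintro _ Q hQ rfl
    rw [Finset.card_image_of_injOn (hinj Q hQ), hcard Q hQ]
  · intro x y hxy
    obtain ⟨a, b, hab, rfl, rfl⟩ := hlift x y hxy
    obtain ⟨Q, hQ, ha, hb⟩ := hcover a b hab
    exact ⟨Q.image φ, Multiset.mem_map_of_mem _ hQ, Finset.mem_image_of_mem φ ha,
      Finset.mem_image_of_mem φ hb⟩

section Split

variable {V : Type*} (G : SimpleGraph V) (u : V) (A B : Set V)

def splitGraphMergeHom (hA : A ⊆ G.neighborSet u) (hB : B ⊆ G.neighborSet u) :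
    splitGraph G u A B →g G where
  toFun o := o.getD u
  map_rel' {x y} h := by
    match x, y, h with
    | some _, some _, Or.inl ⟨_, _, hab⟩ => exact hab
    | some _, some _, Or.inr (Or.inl ⟨rfl, _, hb⟩) => exact hA hb
    | some _, some _, Or.inr (Or.inr ⟨rfl, _, ha⟩) => exact (hA ha).symm
    | some _, none, ⟨_, ha⟩ => exact (hB ha).symm
    | none, some _, ⟨_, hb⟩ => exact hB hb

theorem splitGraph_not_adj_some_none : ¬ (splitGraph G u A B).Adj (some u) none := by
  simp [splitGraph]

theorem injOn_getD_of_isClique {Q : Set (Option V)} (hQ : (splitGraph G u A B).IsClique Q) :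
    Set.InjOn (fun o => o.getD u) Q := by
  rintro (_ | a) ha (_ | b) hb hab <;> simp only [Option.getD_none, Option.getD_some] at hab
  · rfl
  · rw [← hab] at hb
    exact absurd (hQ hb ha (by simp)) (splitGraph_not_adj_some_none G u A B)
  · rw [hab] at ha
    exact absurd (hQ ha hb (by simp)) (splitGraph_not_adj_some_none G u A B)
  · rw [hab]

theorem exists_splitGraph_adj_of_adj (hAB : G.neighborSet u ⊆ A ∪ B) {x y : V}
    (hxy : G.Adj x y) :
    ∃ a b, (splitGraph G u A B).Adj a b ∧ a.getD u = x ∧ b.getD u = y := by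
  by_cases hx : x = u
  · subst hx
    have hy : y ≠ x := hxy.ne.symm
    rcases hAB hxy with hyA | hyB
    · exact ⟨some x, some y, Or.inr (Or.inl ⟨rfl, hy, hyA⟩), rfl, rfl⟩
    · exact ⟨none, some y, ⟨hy, hyB⟩, rfl, rfl⟩
  by_cases hy : y = u
  · subst hy
    rcases hAB hxy.symm with hxA | hxB
    · exact ⟨some x, some y, Or.inr (Or.inr ⟨rfl, hx, hxA⟩), rfl, rfl⟩
    · exact ⟨some x, none, ⟨hx, hxB⟩, rfl, rfl⟩
  exact ⟨some x, some y, Or.inl ⟨hx, hy, hxy⟩, rfl, rfl⟩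

end Split

/-- If `G'` is the split of `G` at `u` along `(A, B)` and `C'` is a sigma uniform clique
cover of `G'`, then `G` has a sigma uniform clique cover of the same weight. -/
theorem stmt12 {V : Type*} [Fintype V] [DecidableEq V] (G : SimpleGraph V) (u : V)
    (A B : Set V) (hA : A ⊆ G.neighborSet u) (hB : B ⊆ G.neighborSet u)
    (hAB : A ∪ B = G.neighborSet u)
    (C' : Multiset (Finset (Option V)))
    (hC' : IsSigmaUniformCover (splitGraph G u A B) C') :
    ∃ C : Multiset (Finset V), IsSigmaUniformCover G C ∧ wgt C = wgt C' := by
  have hinj : ∀ Q ∈ C', Set.InjOn (splitGraphMergeHom G u A B hA hB) Q := fun Q hQ =>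
    injOn_getD_of_isClique G u A B (hC'.1 Q hQ)
  refine ⟨C'.map (Finset.image (splitGraphMergeHom G u A B hA hB)), ?_, wgt_map_image _ C' hinj⟩
  exact hC'.map_hom _ hinj fun x y hxy => exists_splitGraph_adj_of_adj G u A B hAB.ge hxy

end Paper
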